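/- arXiv:1001.2381 — 2 statements merged into one kernel-verified Lean document; each statement's English description precedes it below -/
import Mathlib

section
/- Let T > 0 and let x and x_n (n ∈ ℕ) be càdlàg functions on [0,T] with d_{M₁}(x_n, x) → 0 as n → ∞. Then limsup_{n→∞} sup_{t∈[0,T]} |x_n(t) − x(t)| ≤ 3·J_max(x). (Lemma 4.2(b).) -/
open Set Filter MeasureTheory Topology

/-- The left limit of `x` at `t`, with the convention `x(0−) = x(0)`. -/
noncomputable def leftL (x : ℝ → ℝ) (t : ℝ) : ℝ :=
  if t = 0 then x 0 else Function.leftLim x t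

/-- `x` is càdlàg on `[0, T]`: right-continuous on `[0, T)` and with left limits on `(0, T]`. -/
def IsCadlagOn (T : ℝ) (x : ℝ → ℝ) : Prop :=
  (∀ t ∈ Set.Ico (0:ℝ) T, Filter.Tendsto x (nhdsWithin t (Set.Ici t)) (nhds (x t))) ∧
  (∀ t ∈ Set.Ioc (0:ℝ) T, ∃ L : ℝ, Filter.Tendsto x (nhdsWithin t (Set.Iio t)) (nhds L))

/-- `(u, r)` is a parametric representation of the càdlàg function `x` on `[0, T]`. -/
def IsParamRep (T : ℝ) (x u r : ℝ → ℝ) : Prop :=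
  ContinuousOn u (Set.Icc 0 1) ∧ ContinuousOn r (Set.Icc 0 1) ∧
  MonotoneOn r (Set.Icc 0 1) ∧ r 0 = 0 ∧ r 1 = T ∧
  (∀ s ∈ Set.Icc (0:ℝ) 1, u s ∈ segment ℝ (leftL x (r s)) (x (r s))) ∧
  (∀ t ∈ Set.Icc (0:ℝ) T, ∀ v ∈ segment ℝ (leftL x t) (x t),
    ∃ s ∈ Set.Icc (0:ℝ) 1, r s = t ∧ u s = v) ∧
  (∀ s₁ ∈ Set.Icc (0:ℝ) 1, ∀ s₂ ∈ Set.Icc (0:ℝ) 1, s₁ ≤ s₂ → r s₁ = r s₂ →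
    0 ≤ (u s₂ - u s₁) * (x (r s₁) - leftL x (r s₁)))

/-- Uniform norm over `[0, 1]`. -/
noncomputable def unif (f : ℝ → ℝ) : ℝ := ⨆ s : Set.Icc (0:ℝ) 1, |f s.1|

/-- Uniform norm over `[0, T]`. -/
noncomputable def supT (T : ℝ) (f : ℝ → ℝ) : ℝ := ⨆ t : Set.Icc (0:ℝ) T, |f t.1|

/-- The maximum-jump functional `J_max(x)` over `[0, T]`. -/
noncomputable def Jmax (T : ℝ) (x : ℝ → ℝ) : ℝ :=
  ⨆ t : Set.Icc (0:ℝ) T, |x t.1 - leftL x t.1|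

/-- The Skorohod `M₁` metric on `D([0, T], ℝ)`. -/
noncomputable def dM1 (T : ℝ) (x y : ℝ → ℝ) : ℝ :=
  sInf {d : ℝ | ∃ ux rx uy ry : ℝ → ℝ, IsParamRep T x ux rx ∧ IsParamRep T y uy ry ∧
    d = max (unif fun s => ux s - uy s) (unif fun s => rx s - ry s)}

/-- The `L₁` norm over `[0, 1]`. -/
noncomputable def L1norm (g : ℝ → ℝ) : ℝ := ∫ s in (0:ℝ)..1, |g s|

/-- `r` is absolutely continuous on `[0,1]` with (integrable) derivative `r'`. -/
def AbsContOn01 (r r' : ℝ → ℝ) : Prop :=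
  IntervalIntegrable r' MeasureTheory.volume 0 1 ∧
  ∀ s ∈ Set.Icc (0:ℝ) 1, r s = r 0 + ∫ w in (0:ℝ)..s, r' w

/-- `y` is bounded and Borel measurable on `[0, T]`. -/
def BddMeasOn (T : ℝ) (y : ℝ → ℝ) : Prop :=
  (∃ M : ℝ, ∀ t ∈ Set.Icc (0:ℝ) T, |y t| ≤ M) ∧
  Measurable fun t : Set.Icc (0:ℝ) T => y t.1

/-- The `M₁` oscillation function `w_s(x, δ)` on `[0, T]`. -/
noncomputable def wOsc (T : ℝ) (x : ℝ → ℝ) (δ : ℝ) : ℝ :=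
  sSup {v : ℝ | ∃ t ∈ Set.Icc (0:ℝ) T, ∃ t₁ t₂ t₃ : ℝ,
    max 0 (t - δ) ≤ t₁ ∧ t₁ < t₂ ∧ t₂ < t₃ ∧ t₃ ≤ min (t + δ) T ∧
    v = Metric.infDist (x t₂) (segment ℝ (x t₁) (x t₃))}

/-- The ordinary oscillation modulus `ν(x, δ)` on `[0, T]`. -/
noncomputable def nuOsc (T : ℝ) (x : ℝ → ℝ) (δ : ℝ) : ℝ :=
  sSup {v : ℝ | ∃ t ∈ Set.Icc (0:ℝ) (T - δ), ∃ t₁ ∈ Set.Icc t (t + δ),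
    ∃ t₂ ∈ Set.Icc t (t + δ), v = |x t₁ - x t₂|}

/-!
If `(u₁, r₁)` and `(u₂, r₂)` are parametric representations of `xₙ` and `x` that are `η`-close,
then `xₙ(t) = u₁(s)` for some `s` with `r₁(s) = t`, and `u₁(s)` is `η`-close to `u₂(s)`, a point of
the segment `[x(t'−), x(t')]` at the time `t' = r₂(s)`, `η`-close to `t`. Since `x` has one-sided
limits everywhere, a compactness argument shows that such points lie within `2 J_max(x) + ε` of
`x(t)` as soon as `|t' - t|` is small enough, uniformly in `t`.

Because `dM1` is an infimum over parametric representations, this needs that every càdlàg function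
has one. Take a strictly increasing right-continuous time change `F` with `F(0−) = 0`, `F(T) = 1`,
that jumps at each of the countably many jump times of `x` (a weighted sum of Heaviside steps placed
at them). Then `r` is the generalized inverse of `F`, and while `s` runs over `[F(t−), F(t)]` the
time `r(s)` stays at `t` and `u(s)` runs linearly from `x(t−)` to `x(t)`.
-/

open Function

section LeftLim

variable {α β : Type*} [LinearOrder α] [TopologicalSpace α] [OrderTopology α]
  [TopologicalSpace β] {f : α → β}

theorem leftLim_mem_of_mapsTo_Ioc {s : Set β} (hs : IsClosed s) {a b : α} (hab : a < b)
    (h : MapsTo f (Ioc a b) s) : leftLim f b ∈ s :=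
  hs.mem_of_mapClusterPt (mapClusterPt_leftLim f b) (mem_of_superset (Ioc_mem_nhdsLE hab) h)

variable [RegularSpace β] {a : α} {y : β}

theorem tendsto_leftLim_nhdsGT_of_tendsto [NoMaxOrder α] (h : Tendsto f (𝓝[>] a) (𝓝 y)) :
    Tendsto (leftLim f) (𝓝[>] a) (𝓝 y) := by
  refine (closed_nhds_basis y).tendsto_right_iff.2 fun s ⟨hs, hsc⟩ => ?_
  obtain ⟨u, hau, hu⟩ := mem_nhdsGT_iff_exists_Ioo_subset.1 (h hs)
  filter_upwards [Ioo_mem_nhdsGT hau] with c hc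
  exact leftLim_mem_of_mapsTo_Ioc hsc hc.1 fun t ht => hu ⟨ht.1, ht.2.trans_lt hc.2⟩

theorem tendsto_leftLim_nhdsLT_of_tendsto [NoMinOrder α] (h : Tendsto f (𝓝[<] a) (𝓝 y)) :
    Tendsto (leftLim f) (𝓝[<] a) (𝓝 y) := by
  refine (closed_nhds_basis y).tendsto_right_iff.2 fun s ⟨hs, hsc⟩ => ?_
  obtain ⟨u, hua, hu⟩ := mem_nhdsLT_iff_exists_Ioo_subset.1 (h hs)
  filter_upwards [Ioo_mem_nhdsLT hua] with c hc
  exact leftLim_mem_of_mapsTo_Ioc hsc hc.1 fun t ht => hu ⟨ht.1, ht.2.trans_lt hc.2⟩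

end LeftLim

theorem StrictMono.lt_leftLim {α β : Type*} [LinearOrder α] [TopologicalSpace α]
    [DenselyOrdered α] [ConditionallyCompleteLinearOrder β] [TopologicalSpace β] [OrderTopology β]
    {f : α → β} (hf : StrictMono f) {a b : α} (hab : a < b) : f a < leftLim f b :=
  let ⟨_, hac, hcb⟩ := exists_between hab
  (hf hac).trans_le (hf.monotone.le_leftLim hcb)

theorem tendsto_of_mem_segment {ι E : Type*} [SeminormedAddCommGroup E] [NormedSpace ℝ E]
    {l : Filter ι} {f g h : ι → E} {a : E} (hf : Tendsto f l (𝓝 a)) (hg : Tendsto g l (𝓝 a))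
    (hh : ∀ᶠ i in l, h i ∈ segment ℝ (f i) (g i)) : Tendsto h l (𝓝 a) :=
  Metric.tendsto_nhds.2 fun ε hε => by
    filter_upwards [Metric.tendsto_nhds.1 hf ε hε, Metric.tendsto_nhds.1 hg ε hε, hh]
      with i hfi hgi hhi
    exact (convex_ball a ε).segment_subset hfi hgi hhi

theorem leftL_zero (x : ℝ → ℝ) : leftL x 0 = x 0 := if_pos rfl

theorem leftL_of_ne_zero (x : ℝ → ℝ) {t : ℝ} (ht : t ≠ 0) : leftL x t = leftLim x t := if_neg ht

namespace IsCadlagOn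

variable {T t : ℝ} {x : ℝ → ℝ}

theorem tendsto_nhdsWithin_Ico (hx : IsCadlagOn T x) (ht : t ∈ Icc 0 T) :
    Tendsto x (𝓝[Ico 0 t] t) (𝓝 (leftL x t)) := by
  rcases ht.1.eq_or_lt with rfl | ht₀
  · simp
  obtain ⟨L, hL⟩ := hx.2 t ⟨ht₀, ht.2⟩
  rw [leftL_of_ne_zero x ht₀.ne', leftLim_eq_of_tendsto hL]
  exact hL.mono_left (nhdsWithin_mono _ Ico_subset_Iio_self)

theorem tendsto_nhdsWithin_Icc (hx : IsCadlagOn T x) (ht : t ∈ Icc 0 T) :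
    Tendsto x (𝓝[Icc t T] t) (𝓝 (x t)) := by
  rcases ht.2.eq_or_lt with rfl | htT
  · simpa using tendsto_pure_nhds x t
  exact (hx.1 t ⟨ht.1, htT⟩).mono_left (nhdsWithin_mono _ Icc_subset_Ici_self)

theorem tendsto_leftL_nhdsWithin_Ico (hx : IsCadlagOn T x) (ht : t ∈ Icc 0 T) :
    Tendsto (leftL x) (𝓝[Ico 0 t] t) (𝓝 (leftL x t)) := by
  rcases ht.1.eq_or_lt with rfl | ht₀
  · simp
  obtain ⟨L, hL⟩ := hx.2 t ⟨ht₀, ht.2⟩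
  have hlim := tendsto_leftLim_nhdsLT_of_tendsto hL
  rw [leftL_of_ne_zero x ht₀.ne', leftLim_eq_of_tendsto hL]
  refine (hlim.congr' ?_).mono_left (nhdsWithin_mono _ Ico_subset_Iio_self)
  filter_upwards [Ioo_mem_nhdsLT ht₀] with s hs using (leftL_of_ne_zero x hs.1.ne').symm

theorem tendsto_leftL_nhdsWithin_Ioc (hx : IsCadlagOn T x) (ht : t ∈ Icc 0 T) :
    Tendsto (leftL x) (𝓝[Ioc t T] t) (𝓝 (x t)) := by
  rcases ht.2.eq_or_lt with rfl | htT
  · simp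
  have hright := (hx.1 t ⟨ht.1, htT⟩).mono_left (nhdsWithin_mono _ Ioi_subset_Ici_self)
  refine ((tendsto_leftLim_nhdsGT_of_tendsto hright).congr' ?_).mono_left
    (nhdsWithin_mono _ Ioc_subset_Ioi_self)
  filter_upwards [self_mem_nhdsWithin] with s hs
  exact (leftL_of_ne_zero x (ht.1.trans_lt hs).ne').symm

theorem tendsto_jump_nhdsWithin_Ioc (hx : IsCadlagOn T x) (ht : t ∈ Icc 0 T) :
    Tendsto (fun s => x s - leftL x s) (𝓝[Ioc t T] t) (𝓝 0) := by
  simpa using ((hx.tendsto_nhdsWithin_Icc ht).mono_left (nhdsWithin_mono _ Ioc_subset_Icc_self)).sub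
    (hx.tendsto_leftL_nhdsWithin_Ioc ht)

theorem countable_jumps (hx : IsCadlagOn T x) : {t ∈ Icc 0 T | x t ≠ leftL x t}.Countable := by
  set S : ℕ → Set ℝ := fun n => {t ∈ Icc 0 T | 1 / (n + 1 : ℝ) < |x t - leftL x t|}
  -- jumps tend to `0` from the right, so each `S n` is isolated on the right
  have hS : ∀ n, S n ⊆ {t ∈ S n | 𝓝[S n ∩ Ioi t] t = ⊥} := by
    intro n t ht
    have hsmall := (hx.tendsto_jump_nhdsWithin_Ioc ht.1).eventually
      (Metric.ball_mem_nhds 0 (Nat.one_div_pos_of_nat (n := n)))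
    refine ⟨ht, eventually_false_iff_eq_bot.1 ?_⟩
    filter_upwards [hsmall.filter_mono (nhdsWithin_mono t
      (show S n ∩ Ioi t ⊆ Ioc t T from fun s hs => ⟨hs.2, hs.1.1.2⟩)),
      self_mem_nhdsWithin] with s hs hsS
    exact lt_asymm (by simpa using hs) hsS.1.2
  refine (countable_iUnion fun n => countable_setOfPred_isolated_right_within.mono (hS n)).mono
    fun t ht => ?_
  obtain ⟨n, hn⟩ := exists_nat_one_div_lt (abs_pos.2 (sub_ne_zero.2 ht.2))
  exact mem_iUnion.2 ⟨n, ht.1, hn⟩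

end IsCadlagOn

structure IsTimeChange (T : ℝ) (F : ℝ → ℝ) : Prop where
  strictMono : StrictMono F
  continuousWithinAt_Ici : ∀ t, ContinuousWithinAt F (Ici t) t
  leftLim_zero : leftLim F 0 = 0
  apply_right : F T = 1

noncomputable def paramTime (F : ℝ → ℝ) (T s : ℝ) : ℝ := sInf {t ∈ Icc 0 T | s ≤ F t}

section TimeChange

variable {T s t : ℝ} {F x : ℝ → ℝ}

theorem paramTime_eq (hF : StrictMono F) (ht : t ∈ Icc 0 T) (h₁ : leftLim F t ≤ s)
    (h₂ : s ≤ F t) : paramTime F T s = t := by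
  refine le_antisymm (csInf_le ⟨0, fun _ ha => ha.1.1⟩ ⟨ht, h₂⟩) (le_csInf ⟨t, ht, h₂⟩ ?_)
  rintro a ⟨-, ha⟩
  by_contra! hat
  exact ((hF.lt_leftLim hat).trans_le h₁).not_ge ha

theorem paramTime_apply (hF : StrictMono F) (ht : t ∈ Icc 0 T) : paramTime F T (F t) = t :=
  paramTime_eq hF ht (hF.monotone.leftLim_le le_rfl) le_rfl

namespace IsTimeChange

theorem nonneg_right (hF : IsTimeChange T F) : 0 ≤ T := by
  by_contra! hT
  have := hF.strictMono.monotone.le_leftLim hT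
  rw [hF.apply_right, hF.leftLim_zero] at this
  linarith

theorem leftLim_nonneg (hF : IsTimeChange T F) (ht : 0 ≤ t) : 0 ≤ leftLim F t :=
  hF.leftLim_zero ▸ hF.strictMono.monotone.leftLim ht

theorem apply_mem_Icc (hF : IsTimeChange T F) (ht : t ∈ Icc 0 T) : F t ∈ Icc 0 1 :=
  ⟨(hF.leftLim_nonneg ht.1).trans (hF.strictMono.monotone.leftLim_le le_rfl),
    hF.apply_right ▸ hF.strictMono.monotone ht.2⟩

theorem right_mem_setOf_le (hF : IsTimeChange T F) (hs : s ≤ 1) : T ∈ {t ∈ Icc 0 T | s ≤ F t} :=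
  ⟨⟨hF.nonneg_right, le_rfl⟩, hF.apply_right ▸ hs⟩

theorem paramTime_mem_Icc (hF : IsTimeChange T F) (hs : s ≤ 1) : paramTime F T s ∈ Icc 0 T :=
  ⟨le_csInf ⟨T, hF.right_mem_setOf_le hs⟩ fun _ ha => ha.1.1,
    csInf_le ⟨0, fun _ ha => ha.1.1⟩ (hF.right_mem_setOf_le hs)⟩

theorem le_apply_paramTime (hF : IsTimeChange T F) (hs : s ≤ 1) : s ≤ F (paramTime F T s) := by
  refine ge_of_tendsto ((hF.continuousWithinAt_Ici _).mono_left
    (nhdsWithin_mono _ Ioi_subset_Ici_self)) ?_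
  filter_upwards [self_mem_nhdsWithin] with t' ht'
  obtain ⟨a, ha, hat'⟩ := exists_lt_of_csInf_lt ⟨T, hF.right_mem_setOf_le hs⟩ ht'
  exact ha.2.trans (hF.strictMono.monotone hat'.le)

theorem leftLim_paramTime_le (hF : IsTimeChange T F) (hs : s ∈ Icc 0 1) :
    leftLim F (paramTime F T s) ≤ s := by
  obtain ⟨h₀, hT⟩ := hF.paramTime_mem_Icc hs.2
  rcases h₀.eq_or_lt with h | h
  · rw [← h, hF.leftLim_zero]
    exact hs.1
  refine le_of_tendsto (hF.strictMono.monotone.tendsto_leftLim _) ?_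
  filter_upwards [Ioo_mem_nhdsLT h] with t' ht'
  by_contra! hlt
  have : paramTime F T s ≤ t' :=
    csInf_le ⟨0, fun _ ha => ha.1.1⟩ ⟨⟨ht'.1.le, ht'.2.le.trans hT⟩, hlt.le⟩
  exact this.not_gt ht'.2

theorem monotoneOn_paramTime (hF : IsTimeChange T F) : MonotoneOn (paramTime F T) (Icc 0 1) :=
  fun _ _ _ hs' hss' => csInf_le_csInf ⟨0, fun _ ha => ha.1.1⟩ ⟨T, hF.right_mem_setOf_le hs'.2⟩
    fun _ ha => ⟨ha.1, hss'.trans ha.2⟩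

theorem continuousOn_paramTime (hF : IsTimeChange T F) :
    ContinuousOn (paramTime F T) (Icc 0 1) := by
  let g : Icc (0:ℝ) 1 → Icc 0 T := fun s => ⟨paramTime F T s, hF.paramTime_mem_Icc s.2.2⟩
  have hg : Continuous g := Monotone.continuous_of_surjective
    (fun s s' h => hF.monotoneOn_paramTime s.2 s'.2 h) fun t =>
      ⟨⟨F t, hF.apply_mem_Icc t.2⟩, Subtype.ext (paramTime_apply hF.strictMono t.2)⟩
  exact continuousOn_iff_continuous_domRestrict.2 (continuous_subtype_val.comp hg)

end IsTimeChange

end TimeChange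

/-- Where `F` does not jump, the quotient is `0 / 0 = 0` and the value is `leftL x t`. -/
noncomputable def jumpInterp (F x : ℝ → ℝ) (t s : ℝ) : ℝ :=
  leftL x t + (s - leftLim F t) / (F t - leftLim F t) * (x t - leftL x t)

section JumpInterp

variable {s s₁ s₂ t v : ℝ} {F x : ℝ → ℝ}

theorem jumpInterp_mem_segment (h₁ : leftLim F t ≤ s) (h₂ : s ≤ F t) :
    jumpInterp F x t s ∈ segment ℝ (leftL x t) (x t) := by
  rw [segment_eq_image']
  exact ⟨_, ⟨div_nonneg (sub_nonneg.2 h₁) (sub_nonneg.2 (h₁.trans h₂)),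
    div_le_one_of_le₀ (by linarith) (sub_nonneg.2 (h₁.trans h₂))⟩, rfl⟩

theorem jumpInterp_leftLim : jumpInterp F x t (leftLim F t) = leftL x t := by
  simp [jumpInterp]

theorem jumpInterp_apply (hjump : leftLim F t = F t → x t = leftL x t) :
    jumpInterp F x t (F t) = x t := by
  by_cases h : leftLim F t = F t
  · simp [jumpInterp, h, hjump h]
  · rw [jumpInterp, div_self (sub_ne_zero.2 (Ne.symm h)), one_mul]
    ring

theorem continuous_jumpInterp : Continuous (jumpInterp F x t) := by
  unfold jumpInterp
  fun_prop

theorem exists_jumpInterp_eq (hF : Monotone F) (hjump : leftLim F t = F t → x t = leftL x t)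
    (hv : v ∈ segment ℝ (leftL x t) (x t)) :
    ∃ s ∈ Icc (leftLim F t) (F t), jumpInterp F x t s = v := by
  rw [segment_eq_image'] at hv
  obtain ⟨θ, hθ, rfl⟩ := hv
  have hΔ : 0 ≤ F t - leftLim F t := sub_nonneg.2 (hF.leftLim_le le_rfl)
  refine ⟨leftLim F t + θ * (F t - leftLim F t), ⟨by nlinarith [hθ.1], by nlinarith [hθ.2]⟩, ?_⟩
  rcases hΔ.eq_or_lt with h | h
  · simp [jumpInterp, ← h, hjump (sub_eq_zero.1 h.symm).symm]
  · rw [jumpInterp, add_sub_cancel_left, mul_div_cancel_right₀ _ h.ne']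
    rfl

theorem jumpInterp_sub_mul_jump_nonneg (hF : Monotone F) (h : s₁ ≤ s₂) :
    0 ≤ (jumpInterp F x t s₂ - jumpInterp F x t s₁) * (x t - leftL x t) := by
  have : jumpInterp F x t s₂ - jumpInterp F x t s₁ =
      (s₂ - s₁) / (F t - leftLim F t) * (x t - leftL x t) := by
    unfold jumpInterp
    ring
  rw [this, mul_assoc]
  exact mul_nonneg (div_nonneg (sub_nonneg.2 h) (sub_nonneg.2 (hF.leftLim_le le_rfl)))
    (mul_self_nonneg _)

end JumpInterp

noncomputable def paramValue (F : ℝ → ℝ) (T : ℝ) (x : ℝ → ℝ) (s : ℝ) : ℝ :=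
  jumpInterp F x (paramTime F T s) s

theorem tendsto_paramValue_of_eq {T s₀ : ℝ} {F x : ℝ → ℝ} :
    Tendsto (paramValue F T x) (𝓝[{s ∈ Icc 0 1 | paramTime F T s = paramTime F T s₀}] s₀)
      (𝓝 (paramValue F T x s₀)) :=
  ((continuous_jumpInterp.tendsto s₀).mono_left nhdsWithin_le_nhds).congr'
    (eventually_nhdsWithin_of_forall fun s hs => by
      show jumpInterp F x (paramTime F T s₀) s = jumpInterp F x (paramTime F T s) s
      rw [hs.2])

namespace IsTimeChange

variable {T s₀ : ℝ} {F x : ℝ → ℝ}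

theorem paramValue_mem_segment (hF : IsTimeChange T F) {s : ℝ} (hs : s ∈ Icc 0 1) :
    paramValue F T x s ∈ segment ℝ (leftL x (paramTime F T s)) (x (paramTime F T s)) :=
  jumpInterp_mem_segment (hF.leftLim_paramTime_le hs) (hF.le_apply_paramTime hs.2)

theorem tendsto_paramValue_of_lt (hF : IsTimeChange T F) (hx : IsCadlagOn T x)
    (hs₀ : s₀ ∈ Icc 0 1) :
    Tendsto (paramValue F T x) (𝓝[{s ∈ Icc 0 1 | paramTime F T s < paramTime F T s₀}] s₀)
      (𝓝 (paramValue F T x s₀)) := by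
  set r := paramTime F T
  set A := {s ∈ Icc 0 1 | r s < r s₀}
  have ht₀ := hF.paramTime_mem_Icc hs₀.2
  rcases (hF.leftLim_paramTime_le hs₀).eq_or_lt with heq | hlt
  · have hu : paramValue F T x s₀ = leftL x (r s₀) := by
      rw [paramValue, ← jumpInterp_leftLim (F := F), heq]
    have hr : Tendsto r (𝓝[A] s₀) (𝓝[Ico 0 (r s₀)] (r s₀)) :=
      ((hF.continuousOn_paramTime s₀ hs₀).mono (sep_subset _ _)).tendsto_nhdsWithin
        fun s hs => ⟨(hF.paramTime_mem_Icc hs.1.2).1, hs.2⟩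
    rw [hu]
    exact tendsto_of_mem_segment ((hx.tendsto_leftL_nhdsWithin_Ico ht₀).comp hr)
      ((hx.tendsto_nhdsWithin_Ico ht₀).comp hr)
      (eventually_nhdsWithin_of_forall fun s hs => hF.paramValue_mem_segment hs.1)
  · have hbot : 𝓝[A] s₀ = ⊥ := by
      refine eventually_false_iff_eq_bot.1 ?_
      filter_upwards [self_mem_nhdsWithin, nhdsWithin_le_nhds (Ioi_mem_nhds hlt)] with s hs hs'
      exact ((hF.le_apply_paramTime hs.1.2).trans
        (hF.strictMono.monotone.le_leftLim hs.2)).not_gt hs'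
    rw [hbot]
    exact tendsto_bot

theorem tendsto_paramValue_of_gt (hF : IsTimeChange T F) (hx : IsCadlagOn T x)
    (hjump : ∀ t ∈ Icc 0 T, leftLim F t = F t → x t = leftL x t) (hs₀ : s₀ ∈ Icc 0 1) :
    Tendsto (paramValue F T x) (𝓝[{s ∈ Icc 0 1 | paramTime F T s₀ < paramTime F T s}] s₀)
      (𝓝 (paramValue F T x s₀)) := by
  set r := paramTime F T
  set A := {s ∈ Icc 0 1 | r s₀ < r s}
  have ht₀ := hF.paramTime_mem_Icc hs₀.2
  rcases (hF.le_apply_paramTime hs₀.2).eq_or_lt with heq | hlt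
  · have hu : paramValue F T x s₀ = x (r s₀) := by
      rw [paramValue, ← jumpInterp_apply (hjump _ ht₀), ← heq]
    have hr : Tendsto r (𝓝[A] s₀) (𝓝[Ioc (r s₀) T] (r s₀)) :=
      ((hF.continuousOn_paramTime s₀ hs₀).mono (sep_subset _ _)).tendsto_nhdsWithin
        fun s hs => ⟨hs.2, (hF.paramTime_mem_Icc hs.1.2).2⟩
    rw [hu]
    exact tendsto_of_mem_segment ((hx.tendsto_leftL_nhdsWithin_Ioc ht₀).comp hr)
      (((hx.tendsto_nhdsWithin_Icc ht₀).mono_left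
        (nhdsWithin_mono _ Ioc_subset_Icc_self)).comp hr)
      (eventually_nhdsWithin_of_forall fun s hs => hF.paramValue_mem_segment hs.1)
  · have hbot : 𝓝[A] s₀ = ⊥ := by
      refine eventually_false_iff_eq_bot.1 ?_
      filter_upwards [self_mem_nhdsWithin, nhdsWithin_le_nhds (Iio_mem_nhds hlt)] with s hs hs'
      exact ((hF.strictMono.monotone.le_leftLim hs.2).trans
        (hF.leftLim_paramTime_le hs.1)).not_gt hs'
    rw [hbot]
    exact tendsto_bot

theorem continuousOn_paramValue (hF : IsTimeChange T F) (hx : IsCadlagOn T x)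
    (hjump : ∀ t ∈ Icc 0 T, leftLim F t = F t → x t = leftL x t) :
    ContinuousOn (paramValue F T x) (Icc 0 1) := by
  intro s₀ hs₀
  set r := paramTime F T
  have hcover : Icc 0 1 ⊆ ({s ∈ Icc 0 1 | r s < r s₀} ∪ {s ∈ Icc 0 1 | r s = r s₀}) ∪
      {s ∈ Icc 0 1 | r s₀ < r s} := fun s hs => by
    rcases lt_trichotomy (r s) (r s₀) with h | h | h
    exacts [Or.inl (Or.inl ⟨hs, h⟩), Or.inl (Or.inr ⟨hs, h⟩), Or.inr ⟨hs, h⟩]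
  refine (((hF.tendsto_paramValue_of_lt hx hs₀).sup (tendsto_paramValue_of_eq (s₀ := s₀))).sup
    (hF.tendsto_paramValue_of_gt hx hjump hs₀)).mono_left ?_
  rw [← nhdsWithin_union, ← nhdsWithin_union]
  exact nhdsWithin_mono _ hcover

theorem isParamRep (hF : IsTimeChange T F) (hx : IsCadlagOn T x)
    (hjump : ∀ t ∈ Icc 0 T, leftLim F t = F t → x t = leftL x t) :
    IsParamRep T x (paramValue F T x) (paramTime F T) := by
  have hmono := hF.strictMono.monotone
  have hT := hF.nonneg_right
  refine ⟨hF.continuousOn_paramValue hx hjump, hF.continuousOn_paramTime,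
    hF.monotoneOn_paramTime, ?_, ?_, fun s hs => hF.paramValue_mem_segment hs, ?_, ?_⟩
  · exact paramTime_eq hF.strictMono ⟨le_rfl, hT⟩ hF.leftLim_zero.le
      (hF.apply_mem_Icc ⟨le_rfl, hT⟩).1
  · exact paramTime_eq hF.strictMono ⟨hT, le_rfl⟩
      ((hmono.leftLim_le le_rfl).trans hF.apply_right.le) hF.apply_right.ge
  · intro t ht v hv
    obtain ⟨s, hs, rfl⟩ := exists_jumpInterp_eq hmono (hjump t ht) hv
    have hrs := paramTime_eq hF.strictMono ht hs.1 hs.2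
    exact ⟨s, ⟨(hF.leftLim_nonneg ht.1).trans hs.1, hs.2.trans (hF.apply_mem_Icc ht).2⟩, hrs,
      by rw [paramValue, hrs]⟩
  · intro s₁ _ s₂ _ h hr
    rw [paramValue, paramValue, ← hr]
    exact jumpInterp_sub_mul_jump_nonneg hmono h

end IsTimeChange

noncomputable def stepSum {ι : Type*} (a w : ι → ℝ) (t : ℝ) : ℝ :=
  ∑' i, {i | a i ≤ t}.indicator w i

section StepSum

variable {ι : Type*} {a w : ι → ℝ} {t : ℝ}

theorem stepSum_nonneg (hw : ∀ i, 0 ≤ w i) (t : ℝ) : 0 ≤ stepSum a w t :=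
  tsum_nonneg fun i => indicator_nonneg (fun i _ => hw i) i

theorem monotone_stepSum (hw : ∀ i, 0 ≤ w i) (hsum : Summable w) : Monotone (stepSum a w) :=
  fun _ _ h => (hsum.indicator _).tsum_le_tsum
    (indicator_le_indicator_of_subset (fun _ hi => le_trans hi h) hw) (hsum.indicator _)

theorem tendsto_stepSum {l : Filter ℝ} {S : Set ι} (hw : ∀ i, 0 ≤ w i) (hsum : Summable w)
    (h : ∀ i, ∀ᶠ t in l, a i ≤ t ↔ i ∈ S) :
    Tendsto (stepSum a w) l (𝓝 (∑' i, S.indicator w i)) := by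
  refine tendsto_tsum_of_dominated_convergence hsum (fun i => tendsto_const_nhds.congr' ?_)
    (Eventually.of_forall fun t i => ?_)
  · filter_upwards [h i] with t ht
    by_cases hi : i ∈ S <;> simp [hi, ht]
  · rw [Real.norm_eq_abs, abs_of_nonneg (indicator_nonneg (fun i _ => hw i) i)]
    exact indicator_le_self' (fun i _ => hw i) i

theorem continuousWithinAt_stepSum_Ici (hw : ∀ i, 0 ≤ w i) (hsum : Summable w) :
    ContinuousWithinAt (stepSum a w) (Ici t) t := by
  refine tendsto_stepSum hw hsum fun i => ?_
  rcases le_or_gt (a i) t with h | h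
  · filter_upwards [self_mem_nhdsWithin] with t' ht' using iff_of_true (h.trans ht') h
  · filter_upwards [nhdsWithin_le_nhds (Iio_mem_nhds h)] with t' ht'
      using iff_of_false (not_le.2 ht') (not_le.2 h)

theorem tendsto_stepSum_nhdsLT (hw : ∀ i, 0 ≤ w i) (hsum : Summable w) :
    Tendsto (stepSum a w) (𝓝[<] t) (𝓝 (∑' i, {i | a i < t}.indicator w i)) := by
  refine tendsto_stepSum hw hsum fun i => ?_
  rcases lt_or_ge (a i) t with h | h
  · filter_upwards [nhdsWithin_le_nhds (Ioi_mem_nhds h)] with t' ht'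
      using iff_of_true ht'.le h
  · filter_upwards [self_mem_nhdsWithin] with t' ht'
      using iff_of_false (not_le.2 (ht'.trans_le h)) (not_lt.2 h)

theorem tsum_indicator_lt_add_le_stepSum (hw : ∀ i, 0 ≤ w i) (hsum : Summable w) (j : ι) :
    ∑' i, {i | a i < a j}.indicator w i + w j ≤ stepSum a w (a j) := by
  have hsplit : {i | a i ≤ a j} = {i | a i < a j} ∪ {i | a i = a j} := by
    ext i
    simp [le_iff_lt_or_eq]
  have hdisj : Disjoint {i | a i < a j} {i | a i = a j} :=
    disjoint_left.2 fun _ hlt heq => (ne_of_lt hlt) heq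
  rw [stepSum, hsplit, indicator_union_of_disjoint hdisj,
    (hsum.indicator _).tsum_add (hsum.indicator _)]
  gcongr
  calc w j = {i | a i = a j}.indicator w j :=
        (indicator_of_mem (show j ∈ {i | a i = a j} from rfl) _).symm
    _ ≤ _ := (hsum.indicator _).le_tsum j fun i _ => indicator_nonneg (fun i _ => hw i) i

end StepSum

noncomputable def stepTimeChange {ι : Type*} (a w : ι → ℝ) (T t : ℝ) : ℝ :=
  (t + stepSum a w t) / (T + stepSum a w T)

section StepTimeChange

variable {ι : Type*} {a w : ι → ℝ} {T : ℝ}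

theorem leftLim_stepTimeChange (hw : ∀ i, 0 ≤ w i) (hsum : Summable w) (t : ℝ) :
    leftLim (stepTimeChange a w T) t =
      (t + ∑' i, {i | a i < t}.indicator w i) / (T + stepSum a w T) :=
  leftLim_eq_of_tendsto ((((continuous_id.tendsto t).mono_left nhdsWithin_le_nhds).add
    (tendsto_stepSum_nhdsLT hw hsum)).div_const _)

theorem isTimeChange_stepTimeChange (hw : ∀ i, 0 ≤ w i) (hsum : Summable w)
    (ha : ∀ i, 0 < a i) (hT : 0 < T) : IsTimeChange T (stepTimeChange a w T) where
  strictMono := (strictMono_id.add_monotone (monotone_stepSum hw hsum)).div_const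
    (add_pos_of_pos_of_nonneg hT (stepSum_nonneg hw T))
  continuousWithinAt_Ici _ :=
    (continuousWithinAt_id.add (continuousWithinAt_stepSum_Ici hw hsum)).div_const _
  leftLim_zero := by
    rw [leftLim_stepTimeChange hw hsum]
    simp [fun i => not_lt.2 (ha i).le]
  apply_right := div_self (add_pos_of_pos_of_nonneg hT (stepSum_nonneg hw T)).ne'

theorem leftLim_stepTimeChange_lt (hw : ∀ i, 0 ≤ w i) (hsum : Summable w) (hT : 0 < T) {j : ι}
    (hj : 0 < w j) : leftLim (stepTimeChange a w T) (a j) < stepTimeChange a w T (a j) := by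
  rw [leftLim_stepTimeChange hw hsum, stepTimeChange]
  gcongr
  · exact add_pos_of_pos_of_nonneg hT (stepSum_nonneg hw T)
  · linarith [tsum_indicator_lt_add_le_stepSum (a := a) hw hsum j]

end StepTimeChange

theorem IsCadlagOn.exists_isParamRep {T : ℝ} {x : ℝ → ℝ} (hT : 0 < T) (hx : IsCadlagOn T x) :
    ∃ u r, IsParamRep T x u r := by
  set D := {t ∈ Icc 0 T | x t ≠ leftL x t}
  have : Countable D := hx.countable_jumps.to_subtype
  obtain ⟨e, he⟩ := exists_injective_nat D
  set w : D → ℝ := fun i => (1 / 2) ^ e i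
  have hw : ∀ i, 0 < w i := fun i => by positivity
  have hsum : Summable w := summable_geometric_two.comp_injective he
  have ha : ∀ i : D, 0 < (i : ℝ) := fun i =>
    i.2.1.1.lt_of_ne fun h => i.2.2 (h ▸ (leftL_zero x).symm)
  refine ⟨_, _, (isTimeChange_stepTimeChange (fun i => (hw i).le) hsum ha hT).isParamRep hx
    fun t ht h => ?_⟩
  by_contra hne
  exact (leftLim_stepTimeChange_lt (a := ((↑) : D → ℝ)) (fun i => (hw i).le) hsum hT
    (j := ⟨t, ht, hne⟩) (hw _)).ne h

theorem IsParamRep.mapsTo {T : ℝ} {x u r : ℝ → ℝ} (h : IsParamRep T x u r) :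
    MapsTo r (Icc 0 1) (Icc 0 T) := by
  obtain ⟨-, -, hmono, hr₀, hr₁, -⟩ := h
  exact fun _ hs => ⟨hr₀ ▸ hmono ⟨le_rfl, zero_le_one⟩ hs hs.1,
    hr₁ ▸ hmono hs ⟨zero_le_one, le_rfl⟩ hs.2⟩

theorem IsParamRep.bddAbove_jump {T : ℝ} {x u r : ℝ → ℝ} (h : IsParamRep T x u r) :
    BddAbove (range fun t : Icc (0:ℝ) T => |x t - leftL x t|) := by
  obtain ⟨hu, -, -, -, -, -, hsurj, -⟩ := h
  obtain ⟨C, hC⟩ := isCompact_Icc.exists_bound_of_continuousOn hu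
  refine ⟨2 * C, forall_mem_range.2 fun t => ?_⟩
  obtain ⟨s₁, hs₁, -, hu₁⟩ := hsurj t t.2 _ (right_mem_segment ℝ _ _)
  obtain ⟨s₂, hs₂, -, hu₂⟩ := hsurj t t.2 _ (left_mem_segment ℝ _ _)
  have h₁ := hC s₁ hs₁
  have h₂ := hC s₂ hs₂
  rw [Real.norm_eq_abs] at h₁ h₂
  rw [← hu₁, ← hu₂]
  linarith [abs_sub (u s₁) (u s₂)]

theorem abs_le_unif {f : ℝ → ℝ} (hf : ContinuousOn f (Icc 0 1)) {s : ℝ} (hs : s ∈ Icc 0 1) :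
    |f s| ≤ unif f := by
  obtain ⟨C, hC⟩ := isCompact_Icc.exists_bound_of_continuousOn hf
  exact le_ciSup (f := fun s : Icc (0:ℝ) 1 => |f s|) ⟨C, forall_mem_range.2 fun s => hC s s.2⟩
    ⟨s, hs⟩

namespace IsCadlagOn

variable {T t ε : ℝ} {x : ℝ → ℝ}

theorem jump_le_Jmax (hT : 0 < T) (hx : IsCadlagOn T x) (ht : t ∈ Icc 0 T) :
    |x t - leftL x t| ≤ Jmax T x := by
  obtain ⟨u, r, h⟩ := hx.exists_isParamRep hT
  exact le_ciSup h.bddAbove_jump (⟨t, ht⟩ : Icc (0:ℝ) T)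

theorem eventually_abs_sub_le (hT : 0 < T) (hx : IsCadlagOn T x) (ht : t ∈ Icc 0 T)
    (hε : 0 < ε) : ∀ᶠ t' in 𝓝[Icc 0 T] t,
      |x t' - x t| ≤ Jmax T x + ε ∧ |leftL x t' - x t| ≤ Jmax T x + ε := by
  have hJ := hx.jump_le_Jmax hT ht
  have hJ₀ : 0 ≤ Jmax T x := (abs_nonneg _).trans hJ
  have hsplit : Icc 0 T = Ico 0 t ∪ ({t} ∪ Ioc t T) := by
    rw [← Icc_self, Icc_union_Ioc_eq_Icc le_rfl ht.2, Ico_union_Icc_eq_Icc ht.1 ht.2]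
  rw [hsplit, nhdsWithin_union, nhdsWithin_union, nhdsWithin_singleton]
  refine ⟨?_, ?_, ?_⟩
  · filter_upwards [Metric.tendsto_nhds.1 (hx.tendsto_nhdsWithin_Ico ht) ε hε,
      Metric.tendsto_nhds.1 (hx.tendsto_leftL_nhdsWithin_Ico ht) ε hε] with t' h₁ h₂
    rw [Real.dist_eq] at h₁ h₂
    constructor <;> linarith [abs_sub_le (x t') (leftL x t) (x t),
      abs_sub_le (leftL x t') (leftL x t) (x t), abs_sub_comm (leftL x t) (x t)]
  · simpa [abs_sub_comm] using ⟨by linarith, by linarith⟩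
  · filter_upwards [Metric.tendsto_nhds.1 ((hx.tendsto_nhdsWithin_Icc ht).mono_left
      (nhdsWithin_mono _ Ioc_subset_Icc_self)) ε hε,
      Metric.tendsto_nhds.1 (hx.tendsto_leftL_nhdsWithin_Ioc ht) ε hε] with t' h₁ h₂
    rw [Real.dist_eq] at h₁ h₂
    constructor <;> linarith

theorem exists_forall_mem_segment_abs_sub_le (hT : 0 < T) (hx : IsCadlagOn T x) (hε : 0 < ε) :
    ∃ δ > 0, ∀ t ∈ Icc 0 T, ∀ t' ∈ Icc 0 T, |t' - t| < δ →
      ∀ v ∈ segment ℝ (leftL x t') (x t'), |v - x t| ≤ 2 * (Jmax T x + ε) := by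
  obtain ⟨V, hV, hcover⟩ := lebesgue_number_lemma_nhdsWithin isCompact_Icc
    fun t ht => hx.eventually_abs_sub_le hT ht hε
  obtain ⟨δ, hδ, hδV⟩ := Metric.mem_uniformity_dist.1 hV
  refine ⟨δ, hδ, fun t ht t' ht' htt' v hv => ?_⟩
  obtain ⟨c, hc⟩ := hcover t ht
  have h₁ := (hc ⟨UniformSpace.mem_ball_self t hV, ht⟩).1
  have h₂ := hc ⟨hδV (by rwa [Real.dist_eq, abs_sub_comm]), ht'⟩
  have hball : ∀ y, |y - x c| ≤ Jmax T x + ε → y ∈ Metric.closedBall (x t) (2 * (Jmax T x + ε)) :=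
    fun y hy => by
      rw [Metric.mem_closedBall, Real.dist_eq]
      linarith [abs_sub_le y (x c) (x t), abs_sub_comm (x c) (x t)]
  simpa [Real.dist_eq] using
    (convex_closedBall _ _).segment_subset (hball _ h₂.2) (hball _ h₂.1) hv

end IsCadlagOn

theorem exists_mem_segment_near_of_dM1_lt {T η t : ℝ} {x y : ℝ → ℝ} (hT : 0 < T)
    (hx : IsCadlagOn T x) (hy : IsCadlagOn T y) (h : dM1 T y x < η) (ht : t ∈ Icc 0 T) :
    ∃ t' ∈ Icc 0 T, |t' - t| < η ∧ ∃ v ∈ segment ℝ (leftL x t') (x t'), |y t - v| < η := by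
  obtain ⟨uy, ry, hry⟩ := hy.exists_isParamRep hT
  obtain ⟨ux, rx, hrx⟩ := hx.exists_isParamRep hT
  unfold dM1 at h
  obtain ⟨_, ⟨u₁, r₁, u₂, r₂, h₁, h₂, rfl⟩, hlt⟩ :=
    exists_lt_of_csInf_lt (by exact ⟨_, uy, ry, ux, rx, hry, hrx, rfl⟩) h
  have hmaps := h₂.mapsTo
  obtain ⟨hu₁, hr₁, -, -, -, -, hsurj₁, -⟩ := h₁
  obtain ⟨hu₂, hr₂, -, -, -, hseg₂, -, -⟩ := h₂
  obtain ⟨s, hs, hrs, hus⟩ := hsurj₁ t ht (y t) (right_mem_segment ℝ _ _)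
  refine ⟨r₂ s, hmaps hs, ?_, u₂ s, hseg₂ s hs, ?_⟩
  · rw [← hrs, abs_sub_comm]
    exact ((abs_le_unif (hr₁.sub hr₂) hs).trans (le_max_right _ _)).trans_lt hlt
  · rw [← hus]
    exact ((abs_le_unif (hu₁.sub hu₂) hs).trans (le_max_left _ _)).trans_lt hlt

/-- Lemma 4.2(b): if `xₙ → x` in `(D, M₁)` then
`limsup ‖xₙ - x‖ ≤ 3 J_max(x)`. -/
theorem limsup_uniform_distance_le_three_jmax
    (T : ℝ) (hT : 0 < T)
    (x : ℕ → ℝ → ℝ) (x₀ : ℝ → ℝ)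
    (hxc : ∀ n, IsCadlagOn T (x n)) (hx₀c : IsCadlagOn T x₀)
    (hconv : Filter.Tendsto (fun n => dM1 T (x n) x₀) Filter.atTop (nhds 0)) :
    Filter.limsup (fun n => supT T fun t => x n t - x₀ t) Filter.atTop ≤
      3 * Jmax T x₀ := by
  have hJ : 0 ≤ Jmax T x₀ := Real.iSup_nonneg fun _ => abs_nonneg _
  have : Nonempty (Icc 0 T) := (nonempty_Icc.2 hT.le).to_subtype
  refine le_of_forall_pos_le_add fun ε hε => limsup_le_of_le (isCoboundedUnder_le_of_eventually_le
    _ (.of_forall fun n => Real.iSup_nonneg fun _ => abs_nonneg _)) ?_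
  obtain ⟨δ, hδ, hclose⟩ := hx₀c.exists_forall_mem_segment_abs_sub_le hT (ε := ε / 4) (by positivity)
  filter_upwards [hconv.eventually (gt_mem_nhds (lt_min hδ (half_pos hε)))] with n hn
  refine ciSup_le fun t => ?_
  obtain ⟨t', ht', htt', v, hv, hnv⟩ := exists_mem_segment_near_of_dM1_lt hT hx₀c (hxc n) hn t.2
  have hv₀ := hclose t t.2 t' ht' (htt'.trans_le (min_le_left _ _)) v hv
  linarith [abs_sub_le (x n t) v (x₀ t), min_le_right δ (ε / 2)]
end

section
/- Let h : ℝ → ℝ be Lipschitz with constant c. Let u, uₙ : [0,1] → ℝ be bounded Borel measurable functions, and let r′, r′ₙ : [0,1] → [0,∞) be Lebesgue integrable with R := ess sup r′ₙ < ∞. Suppose v, vₙ : [0,1] → ℝ are bounded Borel measurable functions satisfying v(s) = u(s) + ∫₀ˢ h(v(w)) r′(w) dw and vₙ(s) = uₙ(s) + ∫₀ˢ h(vₙ(w)) r′ₙ(w) dw for all s ∈ [0,1]. Then, with M := sup_{s∈[0,1]} |h(v(s))|, one has sup_{s∈[0,1]} |vₙ(s) − v(s)| ≤ (‖uₙ −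 u‖ + M·‖r′ₙ − r′‖₁)·e^{Rc}. (The Gronwall estimate (3.2) in the proof of Theorem 1.1.) -/
open Set Filter MeasureTheory Topology

/-!
Subtracting the two integral equations and writing
`h(vₙ) r′ₙ − h(v) r′ = (h(vₙ) − h(v)) r′ₙ + h(v) (r′ₙ − r′)`, the bounds `|h(vₙ) − h(v)| ≤ c |vₙ − v|`
and `0 ≤ r′ₙ ≤ R` give `φ(s) ≤ A + K ∫₀ˢ φ` for `φ = |vₙ − v|`, with `A = ‖uₙ − u‖ + M ‖r′ₙ − r′‖₁`
and `K = cR`. Gronwall's inequality then gives `φ(s) ≤ A e^{Ks}`. It is proved by Picard iteration: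
starting from a bound `φ ≤ B`, inserting `φ ≤ A e^{Ks} + C (Ks)ⁿ/n!` into the integral inequality
yields the same bound for `n + 1`, and `(Ks)ⁿ/n! → 0`.
-/

open scoped NNReal Nat

theorem abs_mul_sub_mul_le {x y p q : ℝ} (hp : 0 ≤ p) :
    |x * p - y * q| ≤ |x - y| * p + |y| * |p - q| := by
  calc |x * p - y * q| = |(x - y) * p + y * (p - q)| := by ring_nf
    _ ≤ |x - y| * p + |y| * |p - q| := by
      simpa only [abs_mul, abs_of_nonneg hp] using abs_add_le ((x - y) * p) (y * (p - q))

theorem nonneg_of_ae_restrict_Icc_le {f : ℝ → ℝ} {a b R : ℝ} (hab : a < b)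
    (hf : ∀ s ∈ Icc a b, 0 ≤ f s) (hR : ∀ᵐ s ∂volume.restrict (Icc a b), f s ≤ R) : 0 ≤ R := by
  have : (ae (volume.restrict (Icc a b))).NeBot := by
    rw [ae_restrict_neBot, Real.volume_Icc]
    simpa using hab
  obtain ⟨s, hsR, hs⟩ := (hR.and (ae_restrict_mem measurableSet_Icc)).exists
  exact (hf s hs).trans hsR

theorem MeasureTheory.IntegrableOn.intervalIntegrable_of_mem_Icc {f : ℝ → ℝ} {T s : ℝ}
    (hf : IntegrableOn f (Icc 0 T)) (hs : s ∈ Icc 0 T) : IntervalIntegrable f volume 0 s :=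
  (hf.mono_set (by rw [uIcc_of_le hs.1]; exact Icc_subset_Icc_right hs.2)).intervalIntegrable

namespace BddMeasOn

variable {T : ℝ} {y z : ℝ → ℝ}

theorem aestronglyMeasurable (hy : BddMeasOn T y) :
    AEStronglyMeasurable y (volume.restrict (Icc 0 T)) :=
  (aemeasurable_restrict_of_measurable_subtype measurableSet_Icc hy.2).aestronglyMeasurable

theorem ae_abs_le (hy : BddMeasOn T y) : ∃ M, ∀ᵐ t ∂volume.restrict (Icc 0 T), ‖y t‖ ≤ M := by
  obtain ⟨⟨M, hM⟩, -⟩ := hy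
  exact ⟨M, (ae_restrict_mem measurableSet_Icc).mono hM⟩

theorem integrableOn (hy : BddMeasOn T y) : IntegrableOn y (Icc 0 T) := by
  obtain ⟨M, hM⟩ := hy.ae_abs_le
  exact IntegrableOn.of_bound (by simp) hy.aestronglyMeasurable M hM

theorem integrableOn_mul {r : ℝ → ℝ} (hy : BddMeasOn T y) (hr : IntegrableOn r (Icc 0 T)) :
    IntegrableOn (fun t => y t * r t) (Icc 0 T) := by
  obtain ⟨M, hM⟩ := hy.ae_abs_le
  exact hr.bdd_mul hy.aestronglyMeasurable hM

theorem sub (hy : BddMeasOn T y) (hz : BddMeasOn T z) : BddMeasOn T (fun t => y t - z t) := by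
  obtain ⟨⟨M, hM⟩, hym⟩ := hy
  obtain ⟨⟨N, hN⟩, hzm⟩ := hz
  exact ⟨⟨M + N, fun t ht => (abs_sub _ _).trans (add_le_add (hM t ht) (hN t ht))⟩, hym.sub hzm⟩

theorem comp_lipschitzWith {h : ℝ → ℝ} {c : ℝ≥0} (hy : BddMeasOn T y) (hh : LipschitzWith c h) :
    BddMeasOn T (fun t => h (y t)) := by
  obtain ⟨⟨M, hM⟩, hym⟩ := hy
  refine ⟨⟨c * M + |h 0|, fun t ht => ?_⟩, hh.continuous.measurable.comp hym⟩
  have hdist : |h (y t) - h 0| ≤ c * |y t - 0| := by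
    simpa only [Real.dist_eq] using hh.dist_le_mul (y t) 0
  calc |h (y t)|
      _ ≤ |h (y t) - h 0| + |h 0| := by linarith [abs_sub_abs_le_abs_sub (h (y t)) (h 0)]
      _ ≤ c * M + |h 0| := by
        rw [sub_zero] at hdist
        gcongr
        exact hdist.trans (by gcongr; exact hM t ht)

theorem abs_le_iSup (hy : BddMeasOn T y) {t : ℝ} (ht : t ∈ Icc 0 T) :
    |y t| ≤ ⨆ s : Icc (0:ℝ) T, |y s| := by
  obtain ⟨⟨M, hM⟩, -⟩ := hy
  exact le_ciSup (f := fun s : Icc (0:ℝ) T => |y s|) ⟨M, by rintro _ ⟨s, rfl⟩; exact hM s s.2⟩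
    ⟨t, ht⟩

end BddMeasOn

theorem hasDerivAt_mul_pow_succ_div_factorial (K w : ℝ) (n : ℕ) :
    HasDerivAt (fun w => (K * w) ^ (n + 1) / (n + 1)!) (K * ((K * w) ^ n / n !)) w := by
  refine ((((hasDerivAt_id' w).const_mul K).pow (n + 1)).div_const ((n + 1)! : ℝ)).congr_deriv ?_
  rw [Nat.factorial_succ, Nat.add_sub_cancel]
  push_cast
  field_simp

section Gronwall

variable {f : ℝ → ℝ} {A K T : ℝ}

theorem le_mul_exp_add_pow_div_factorial_succ (hK : 0 ≤ K) (hf : IntegrableOn f (Icc 0 T))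
    (hgr : ∀ s ∈ Icc 0 T, f s ≤ A + K * ∫ w in (0:ℝ)..s, f w) {C : ℝ} {n : ℕ}
    (hn : ∀ s ∈ Icc 0 T, f s ≤ A * Real.exp (K * s) + C * ((K * s) ^ n / n !)) :
    ∀ s ∈ Icc 0 T, f s ≤ A * Real.exp (K * s) + C * ((K * s) ^ (n + 1) / (n + 1)!) := by
  intro s hs
  have hbound : Continuous fun w => A * Real.exp (K * w) + C * ((K * w) ^ n / n !) := by
    fun_prop
  have hint_le : ∫ w in (0:ℝ)..s, f w ≤
      ∫ w in (0:ℝ)..s, (A * Real.exp (K * w) + C * ((K * w) ^ n / n !)) :=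
    intervalIntegral.integral_mono_on hs.1 (hf.intervalIntegrable_of_mem_Icc hs)
      (hbound.intervalIntegrable 0 s) fun w hw => hn w ⟨hw.1, hw.2.trans hs.2⟩
  have hint_eq : ∫ w in (0:ℝ)..s, K * (A * Real.exp (K * w) + C * ((K * w) ^ n / n !)) =
      A * (Real.exp (K * s) - 1) + C * ((K * s) ^ (n + 1) / (n + 1)!) := by
    rw [intervalIntegral.integral_eq_sub_of_hasDerivAt
      (f := fun w => A * Real.exp (K * w) + C * ((K * w) ^ (n + 1) / (n + 1)!))
      (fun w _ => ?deriv) ((hbound.intervalIntegrable 0 s).const_mul K)]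
    · simp only [mul_zero, Real.exp_zero, zero_pow n.succ_ne_zero, zero_div]
      ring
    · refine ((((hasDerivAt_id' w).const_mul K).exp.const_mul A).add
        ((hasDerivAt_mul_pow_succ_div_factorial K w n).const_mul C)).congr_deriv ?_
      ring
  calc f s ≤ A + K * ∫ w in (0:ℝ)..s, f w := hgr s hs
    _ ≤ A + K * ∫ w in (0:ℝ)..s, (A * Real.exp (K * w) + C * ((K * w) ^ n / n !)) := by gcongr
    _ = A * Real.exp (K * s) + C * ((K * s) ^ (n + 1) / (n + 1)!) := by
      rw [← intervalIntegral.integral_const_mul, hint_eq]; ring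

theorem le_mul_exp_of_le_add_mul_integral (hK : 0 ≤ K) (hf : IntegrableOn f (Icc 0 T))
    {B : ℝ} (hB : ∀ s ∈ Icc 0 T, f s ≤ B)
    (hgr : ∀ s ∈ Icc 0 T, f s ≤ A + K * ∫ w in (0:ℝ)..s, f w) :
    ∀ s ∈ Icc 0 T, f s ≤ A * Real.exp (K * s) := by
  -- chosen so that `f ≤ B` is the case `n = 0`, whatever the sign of `A`
  set C := B + |A| * Real.exp (K * T)
  have hiter : ∀ n : ℕ, ∀ s ∈ Icc 0 T, f s ≤ A * Real.exp (K * s) + C * ((K * s) ^ n / n !) := by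
    intro n
    induction n with
    | zero =>
      intro s hs
      have hexp : Real.exp (K * s) ≤ Real.exp (K * T) := by gcongr; exact hs.2
      have hA : -(|A| * Real.exp (K * T)) ≤ A * Real.exp (K * s) := by
        nlinarith [neg_abs_le A, abs_nonneg A, Real.exp_pos (K * s)]
      simp only [pow_zero, Nat.factorial_zero, Nat.cast_one, div_one, mul_one, C]
      linarith [hB s hs]
    | succ n ih => exact le_mul_exp_add_pow_div_factorial_succ hK hf hgr ih
  intro s hs
  have hlim : Tendsto (fun n : ℕ => A * Real.exp (K * s) + C * ((K * s) ^ n / n !)) atTop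
      (𝓝 (A * Real.exp (K * s))) := by
    simpa using ((FloorSemiring.tendsto_pow_div_factorial_atTop (K * s)).const_mul C).const_add
      (A * Real.exp (K * s))
  exact ge_of_tendsto' hlim fun n => hiter n s hs

end Gronwall

theorem unif_nonneg (g : ℝ → ℝ) : 0 ≤ unif g :=
  Real.iSup_nonneg fun _ => abs_nonneg _

theorem L1norm_nonneg (g : ℝ → ℝ) : 0 ≤ L1norm g :=
  intervalIntegral.integral_nonneg zero_le_one fun _ _ => abs_nonneg _

theorem integral_abs_le_L1norm {g : ℝ → ℝ} (hg : IntervalIntegrable g volume 0 1) {s : ℝ}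
    (hs : s ∈ Icc (0:ℝ) 1) : ∫ w in (0:ℝ)..s, |g w| ≤ L1norm g :=
  intervalIntegral.integral_mono_interval le_rfl hs.1 hs.2 (ae_of_all _ fun _ => abs_nonneg _) hg.abs

theorem abs_sub_le_add_mul_integral_of_integral_eq {h : ℝ → ℝ} {c : ℝ≥0} (hh : LipschitzWith c h)
    {T R M : ℝ} {u un v vn r' rn' : ℝ → ℝ} (hvb : BddMeasOn T v) (hvnb : BddMeasOn T vn)
    (hr' : IntegrableOn r' (Icc 0 T)) (hrn' : IntegrableOn rn' (Icc 0 T))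
    (hrn'nn : ∀ s ∈ Icc 0 T, 0 ≤ rn' s) (hR : ∀ᵐ s ∂volume.restrict (Icc 0 T), rn' s ≤ R)
    (hM : ∀ s ∈ Icc 0 T, |h (v s)| ≤ M)
    (hv : ∀ s ∈ Icc 0 T, v s = u s + ∫ w in (0:ℝ)..s, h (v w) * r' w)
    (hvn : ∀ s ∈ Icc 0 T, vn s = un s + ∫ w in (0:ℝ)..s, h (vn w) * rn' w)
    {s : ℝ} (hs : s ∈ Icc 0 T) :
    |vn s - v s| ≤ |un s - u s| + M * (∫ w in (0:ℝ)..s, |rn' w - r' w|) +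
      c * R * ∫ w in (0:ℝ)..s, |vn w - v w| := by
  have hint {g : ℝ → ℝ} (hg : IntegrableOn g (Icc 0 T)) : IntervalIntegrable g volume 0 s :=
    hg.intervalIntegrable_of_mem_Icc hs
  have hdiff : vn s - v s = (un s - u s) + ∫ w in (0:ℝ)..s, (h (vn w) * rn' w - h (v w) * r' w) := by
    rw [intervalIntegral.integral_sub (hint ((hvnb.comp_lipschitzWith hh).integrableOn_mul hrn'))
      (hint ((hvb.comp_lipschitzWith hh).integrableOn_mul hr')), hvn s hs, hv s hs]
    ring
  have hpt : ∀ᵐ w, w ∈ Ioc 0 s → ‖h (vn w) * rn' w - h (v w) * r' w‖ ≤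
      M * |rn' w - r' w| + c * R * |vn w - v w| := by
    filter_upwards [(ae_restrict_iff' measurableSet_Icc).1 hR] with w hwR hw
    have hwT : w ∈ Icc 0 T := ⟨hw.1.le, hw.2.trans hs.2⟩
    have hLw : |h (vn w) - h (v w)| ≤ c * |vn w - v w| := by
      simpa only [Real.dist_eq] using hh.dist_le_mul (vn w) (v w)
    have hrn'w := hrn'nn w hwT
    have hRw := hwR hwT
    have hMw := hM w hwT
    calc ‖h (vn w) * rn' w - h (v w) * r' w‖
        ≤ |h (vn w) - h (v w)| * rn' w + |h (v w)| * |rn' w - r' w| :=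
          abs_mul_sub_mul_le hrn'w
      _ ≤ c * |vn w - v w| * R + M * |rn' w - r' w| := by gcongr
      _ = M * |rn' w - r' w| + c * R * |vn w - v w| := by ring
  have hr'diff : IntervalIntegrable (fun w => |rn' w - r' w|) volume 0 s :=
    (hint (hrn'.sub hr')).abs
  have hvdiff : IntervalIntegrable (fun w => |vn w - v w|) volume 0 s :=
    (hint (hvnb.sub hvb).integrableOn).abs
  have hest := intervalIntegral.norm_integral_le_of_norm_le hs.1 hpt
    ((hr'diff.const_mul M).add (hvdiff.const_mul _))
  rw [intervalIntegral.integral_add (hr'diff.const_mul M) (hvdiff.const_mul _),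
    intervalIntegral.integral_const_mul, intervalIntegral.integral_const_mul] at hest
  rw [hdiff, add_assoc]
  exact (abs_add_le _ _).trans (add_le_add le_rfl hest)

theorem gronwall_estimate_for_parametric_integral_equation_general
    (c : ℝ) (h : ℝ → ℝ)
    (hLip : ∀ w₁ w₂ : ℝ, |h w₁ - h w₂| ≤ c * |w₁ - w₂|)
    (u un : ℝ → ℝ) (hub : BddMeasOn 1 u) (hunb : BddMeasOn 1 un)
    (r' rn' : ℝ → ℝ)
    (hrn'nn : ∀ s ∈ Set.Icc (0:ℝ) 1, 0 ≤ rn' s)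
    (hr'int : IntervalIntegrable r' MeasureTheory.volume 0 1)
    (hrn'int : IntervalIntegrable rn' MeasureTheory.volume 0 1)
    (R : ℝ)
    (hR : ∀ᵐ s ∂(MeasureTheory.volume.restrict (Set.Icc (0:ℝ) 1)), rn' s ≤ R)
    (v vn : ℝ → ℝ) (hvb : BddMeasOn 1 v) (hvnb : BddMeasOn 1 vn)
    (hv : ∀ s ∈ Set.Icc (0:ℝ) 1, v s = u s + ∫ w in (0:ℝ)..s, h (v w) * r' w)
    (hvn : ∀ s ∈ Set.Icc (0:ℝ) 1, vn s = un s + ∫ w in (0:ℝ)..s, h (vn w) * rn' w) :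
    unif (fun s => vn s - v s) ≤
      (unif (fun s => un s - u s) +
          (⨆ s : Set.Icc (0:ℝ) 1, |h (v s.1)|) * L1norm (fun s => rn' s - r' s)) *
        Real.exp (R * c) := by
  have hc : 0 ≤ c := (abs_nonneg _).trans (by simpa using hLip 1 0)
  have hh : LipschitzWith (Real.toNNReal c) h := LipschitzWith.of_dist_le_mul fun x y => by
    simpa only [Real.dist_eq, Real.coe_toNNReal c hc] using hLip x y
  have hR0 : 0 ≤ R := nonneg_of_ae_restrict_Icc_le zero_lt_one hrn'nn hR
  have hintOn {g : ℝ → ℝ} (hg : IntervalIntegrable g volume 0 1) : IntegrableOn g (Icc 0 1) :=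
    (intervalIntegrable_iff_integrableOn_Icc_of_le zero_le_one).1 hg
  have hhv := hvb.comp_lipschitzWith hh
  set M := ⨆ s : Icc (0:ℝ) 1, |h (v s)|
  have hM0 : 0 ≤ M := (abs_nonneg _).trans (hhv.abs_le_iSup (T := 1) ⟨le_rfl, zero_le_one⟩)
  have hgr : ∀ s ∈ Icc (0:ℝ) 1, |vn s - v s| ≤
      (unif (fun s => un s - u s) + M * L1norm (fun s => rn' s - r' s)) +
        c * R * ∫ w in (0:ℝ)..s, |vn w - v w| := by
    intro s hs
    have hvs := abs_sub_le_add_mul_integral_of_integral_eq hh hvb hvnb (hintOn hr'int)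
      (hintOn hrn'int) hrn'nn hR (fun t ht => hhv.abs_le_iSup ht) hv hvn hs
    rw [Real.coe_toNNReal c hc] at hvs
    have hN : |un s - u s| ≤ unif (fun s => un s - u s) := (hunb.sub hub).abs_le_iSup hs
    nlinarith [integral_abs_le_L1norm (hrn'int.sub hr'int) hs]
  have hA0 : 0 ≤ unif (fun s => un s - u s) + M * L1norm (fun s => rn' s - r' s) :=
    add_nonneg (unif_nonneg _) (mul_nonneg hM0 (L1norm_nonneg _))
  have hgron := le_mul_exp_of_le_add_mul_integral (mul_nonneg hc hR0)
    (hvnb.sub hvb).integrableOn.abs (fun s hs => (hvnb.sub hvb).abs_le_iSup hs) hgr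
  refine ciSup_le fun s => (hgron s s.2).trans ?_
  have hcRs : c * R * s ≤ R * c := by nlinarith [s.2.2, mul_nonneg hc hR0]
  gcongr

/-- The Gronwall estimate (3.2) in the proof of Theorem 1.1. -/
theorem gronwall_estimate_for_parametric_integral_equation
    (c : ℝ) (h : ℝ → ℝ)
    (hLip : ∀ w₁ w₂ : ℝ, |h w₁ - h w₂| ≤ c * |w₁ - w₂|)
    (u un : ℝ → ℝ) (hub : BddMeasOn 1 u) (hunb : BddMeasOn 1 un)
    (r' rn' : ℝ → ℝ)
    (hr'nn : ∀ s ∈ Set.Icc (0:ℝ) 1, 0 ≤ r' s)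
    (hrn'nn : ∀ s ∈ Set.Icc (0:ℝ) 1, 0 ≤ rn' s)
    (hr'int : IntervalIntegrable r' MeasureTheory.volume 0 1)
    (hrn'int : IntervalIntegrable rn' MeasureTheory.volume 0 1)
    (R : ℝ)
    (hR : ∀ᵐ s ∂(MeasureTheory.volume.restrict (Set.Icc (0:ℝ) 1)), rn' s ≤ R)
    (v vn : ℝ → ℝ) (hvb : BddMeasOn 1 v) (hvnb : BddMeasOn 1 vn)
    (hv : ∀ s ∈ Set.Icc (0:ℝ) 1, v s = u s + ∫ w in (0:ℝ)..s, h (v w) * r' w)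
    (hvn : ∀ s ∈ Set.Icc (0:ℝ) 1, vn s = un s + ∫ w in (0:ℝ)..s, h (vn w) * rn' w) :
    unif (fun s => vn s - v s) ≤
      (unif (fun s => un s - u s) +
          (⨆ s : Set.Icc (0:ℝ) 1, |h (v s.1)|) * L1norm (fun s => rn' s - r' s)) *
        Real.exp (R * c) :=
  gronwall_estimate_for_parametric_integral_equation_general c h hLip u un hub hunb r' rn' hrn'nn
    hr'int hrn'int R hR v vn hvb hvnb hv hvn
end
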